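/- For every 0 ≤ i ≤ r_1−1, the difference φ_i − ψ_{q_1r+i} lies in the ideal of R generated by ψ_0,…,ψ_{q_1r−1}; that is, φ_i ≡ ψ_{q_1r+i} (mod (ψ_0,…,ψ_{q_1r−1})). -/

import Mathlib

/-!
Write `B = 1 + b_{r-1}t + ⋯ + b_0t^r`, `A = 1 + a_{n-1}t + ⋯ + a_0t^n` and
`D = 1 + d_{n-1}t + ⋯ + d_0t^n`. From `B·D ≡ A (mod t^{n+1})` we get `d_m = [t^{n-m}] B⁻¹A`, and
since `∂B/∂b_j = t^{r-j}` and `∂A/∂b_j = 0`, differentiating gives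
`ψ_{sr+i} = (-1)^s s! [t^{n-sr-i}] B^{-(s+1)}A`. So modulo the ideal `I = (ψ_0, …, ψ_{q₁r-1})` the
coefficients of `B^{-(s+1)}A` vanish in degrees `(n-(s+1)r, n-sr]` for every `s < q₁`. As
`B^{-(s+1)}A = B^{q₁-1-s}·B^{-q₁}A` and `B` has degree `r`, induction on the degree shows that the
coefficients of `B^{-q₁}A` vanish modulo `I` in all degrees `(r₁, n]`.

Hence modulo `I` and `t^{r+1}` the substitution sends `1 + g_1t + ⋯ + g_{r₁}t^{r₁}` to `B^{-q₁}A`,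
so the defining congruence of the `w_i` becomes `D·W ≡ B^{q₁}` for the substituted
`W = 1 + w_{r-1}t + ⋯ + w_0t^r`, while `α ≡ B^{-q₁}D` and `α·β ≡ 1` give `D·β ≡ B^{q₁}`. Cancelling
the unit `D` and comparing coefficients of `t^{r-i}` gives `φ_i ≡ β_{(q₁-1)r+r₁+i}`.
-/

open MvPolynomial Matrix

noncomputable section

namespace TB

/-- The polynomial ring `ℂ[a_0,…,a_{n-1},b_0,…,b_{r-1}]`: variable `Sum.inl i` is `a_i`
and `Sum.inr j` is `b_j`. -/
abbrev R (n r : ℕ) : Type := MvPolynomial (Fin n ⊕ Fin r) ℂ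

/-- The power series `1 + (cf 1)·t + ⋯ + (cf m)·t^m`. -/
def ser {A : Type*} [CommRing A] (m : ℕ) (cf : ℕ → A) : PowerSeries A :=
  PowerSeries.mk fun k => if k = 0 then 1 else if k ≤ m then cf k else 0

/-- `1 + a_{n-1} t + ⋯ + a_0 t^n`. -/
def Aser (n r : ℕ) : PowerSeries (R n r) :=
  ser n fun k => if h : 1 ≤ k ∧ k ≤ n then X (Sum.inl ⟨n - k, by omega⟩) else 0

/-- `1 + b_{r-1} t + ⋯ + b_0 t^r`. -/
def Bser (n r : ℕ) : PowerSeries (R n r) :=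
  ser r fun k => if h : 1 ≤ k ∧ k ≤ r then X (Sum.inr ⟨r - k, by omega⟩) else 0

/-- `1 + d_{n-1} t + ⋯ + d_0 t^n`. -/
def Dser (n r : ℕ) (d : Fin n → R n r) : PowerSeries (R n r) :=
  ser n fun k => if h : 1 ≤ k ∧ k ≤ n then d ⟨n - k, by omega⟩ else 0

/-- `1 + d_{n-1} t + ⋯ + d_1 t^{n-1}`. -/
def Dhatser (n r : ℕ) (d : Fin n → R n r) : PowerSeries (R n r) :=
  ser (n - 1) fun k => if h : 1 ≤ k ∧ k ≤ n - 1 then d ⟨n - k, by omega⟩ else 0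

/-- `f(x) = x^n + a_{n-1}x^{n-1} + ⋯ + a_0`. -/
def fpoly (n r : ℕ) : Polynomial (R n r) :=
  Polynomial.X ^ n + ∑ i : Fin n, Polynomial.C (X (Sum.inl i)) * Polynomial.X ^ (i : ℕ)

/-- `g(x) = x^r + b_{r-1}x^{r-1} + ⋯ + b_0`. -/
def gpoly (n r : ℕ) : Polynomial (R n r) :=
  Polynomial.X ^ r + ∑ j : Fin r, Polynomial.C (X (Sum.inr j)) * Polynomial.X ^ (j : ℕ)

/-- The coefficient `c_k` of `f·g`, for `0 ≤ k ≤ n+r-1`. -/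
def cc (n r : ℕ) (k : Fin (n + r)) : R n r := (fpoly n r * gpoly n r).coeff (k : ℕ)

/-- `d_0, …, d_{n-1}` are the unique polynomials with
`(1 + b_{r-1}t + ⋯ + b_0 t^r)(1 + d_{n-1}t + ⋯ + d_0 t^n) ≡ 1 + a_{n-1}t + ⋯ + a_0 t^n (mod t^{n+1})`. -/
def dSpec (n r : ℕ) (d : Fin n → R n r) : Prop :=
  ∀ k ≤ n, PowerSeries.coeff k (Bser n r * Dser n r d)
    = PowerSeries.coeff k (Aser n r)

/-- `ψ_i = d_i` for `0 ≤ i ≤ r-1`, and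
`ψ_{s·r+i} = ∂^s d_{r-1} / (∂b_0^{s-1} ∂b_{r-1-i})` for `s ≥ 1`, `0 ≤ i ≤ r-1`. -/
def psi (n r : ℕ) (hr : 0 < r) (hrn : r ≤ n) (d : Fin n → R n r) (m : ℕ) : R n r :=
  if h : m < r then d ⟨m, by omega⟩
  else
    (fun q => pderiv (Sum.inr (⟨0, hr⟩ : Fin r)) q)^[m / r - 1]
      (pderiv (Sum.inr (⟨r - 1 - m % r, by omega⟩ : Fin r)) (d ⟨r - 1, by omega⟩))

/-- The `m×m` lower shift matrix over `R n r`. -/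
def Lmat (n r m : ℕ) : Matrix (Fin m) (Fin m) (R n r) :=
  Matrix.of fun i j => if (i : ℕ) = (j : ℕ) + 1 then 1 else 0

/-- `B = I_n + b_{r-1}L_n + ⋯ + b_0 L_n^r`. -/
def Bmat (n r : ℕ) (hr : 0 < r) : Matrix (Fin n) (Fin n) (R n r) :=
  1 + ∑ k ∈ Finset.range r, (X (Sum.inr (⟨r - 1 - k, by omega⟩ : Fin r)) : R n r) • Lmat n r n ^ (k + 1)

/-- `D̂ = I_n + d_{n-1}L_n + ⋯ + d_1 L_n^{n-1}`. -/
def Dhat (n r : ℕ) (hn : 0 < n) (d : Fin n → R n r) : Matrix (Fin n) (Fin n) (R n r) :=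
  1 + ∑ k ∈ Finset.range (n - 1), d ⟨n - 1 - k, by omega⟩ • Lmat n r n ^ (k + 1)

/-- `D`: the first `r` columns of `D̂`. -/
def Dmat (n r : ℕ) (hn : 0 < n) (hrn : r ≤ n) (d : Fin n → R n r) :
    Matrix (Fin n) (Fin r) (R n r) :=
  (Dhat n r hn d).submatrix id (Fin.castLE hrn)

/-- `Â = I_n + a_{n-1}L_n + ⋯ + a_1 L_n^{n-1}`. -/
def Ahat (n r : ℕ) (hn : 0 < n) : Matrix (Fin n) (Fin n) (R n r) :=
  1 + ∑ k ∈ Finset.range (n - 1),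
    (X (Sum.inl (⟨n - 1 - k, by omega⟩ : Fin n)) : R n r) • Lmat n r n ^ (k + 1)

/-- `A`: the first `r` columns of `Â`. -/
def Amat (n r : ℕ) (hn : 0 < n) (hrn : r ≤ n) : Matrix (Fin n) (Fin r) (R n r) :=
  (Ahat n r hn).submatrix id (Fin.castLE hrn)

/-- The Jacobian matrix of a family `p` of elements of `R n r`: the row of index `i` is
`(∂p_i/∂a_{n-1}, …, ∂p_i/∂a_0, ∂p_i/∂b_{r-1}, …, ∂p_i/∂b_0)`. -/
def jac {n r : ℕ} {ι : Type*} (p : ι → R n r) : Matrix ι (Fin (n + r)) (R n r) :=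
  Matrix.of fun i j =>
    if h : (j : ℕ) < n then pderiv (Sum.inl (⟨n - 1 - (j : ℕ), by omega⟩ : Fin n)) (p i)
    else
      pderiv (Sum.inr (⟨r - 1 - ((j : ℕ) - n), by have := j.isLt; omega⟩ : Fin r)) (p i)

/-- The set of all `k×k` minors of a matrix. -/
def minorsSet {n r : ℕ} {ι : Type*} (k : ℕ) (M : Matrix ι (Fin (n + r)) (R n r)) :
    Set (R n r) :=
  { x | ∃ (ri : Fin k → ι) (ci : Fin k → Fin (n + r)), x = (M.submatrix ri ci).det }

/-- Evaluation at the origin `a_i = b_j = 0`. -/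
def ev0 (n r : ℕ) : R n r →+* ℂ := eval fun _ => 0

/-- The maximal ideal `(a_0,…,a_{n-1},b_0,…,b_{r-1})`. -/
def mIdeal (n r : ℕ) : Ideal (R n r) :=
  Ideal.span (Set.range (X : (Fin n ⊕ Fin r) → R n r))

/-- `1 + g_1 t + ⋯ + g_{r_1} t^{r_1}` over `S = ℂ[g_1,…,g_{r_1},b_0,…,b_{r-1}] = R r1 r`,
where `g_k` is the variable `Sum.inl ⟨k-1⟩`. -/
def Gser (r1 r : ℕ) : PowerSeries (R r1 r) :=
  ser r1 fun k => if h : 1 ≤ k ∧ k ≤ r1 then X (Sum.inl ⟨k - 1, by omega⟩) else 0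

/-- `1 + w_{r-1} t + ⋯ + w_0 t^r`. -/
def Wser (r1 r : ℕ) (w : Fin r → R r1 r) : PowerSeries (R r1 r) :=
  ser r fun k => if h : 1 ≤ k ∧ k ≤ r then w ⟨r - k, by omega⟩ else 0

/-- `1 + w_{r-1} t + ⋯ + w_1 t^{r-1}`. -/
def Whatser (r1 r : ℕ) (w : Fin r → R r1 r) : PowerSeries (R r1 r) :=
  ser (r - 1) fun k => if h : 1 ≤ k ∧ k ≤ r - 1 then w ⟨r - k, by omega⟩ else 0

/-- `w_0,…,w_{r-1}` are the unique polynomials with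
`(1 + g_1 t + ⋯ + g_{r_1}t^{r_1})(1 + w_{r-1}t + ⋯ + w_0 t^r) ≡ 1 + b_{r-1}t + ⋯ + b_0 t^r
(mod t^{r+1})`. -/
def wSpec (r1 r : ℕ) (w : Fin r → R r1 r) : Prop :=
  ∀ k ≤ r, PowerSeries.coeff k (Gser r1 r * Wser r1 r w)
    = PowerSeries.coeff k (Bser r1 r)

/-- `φ'_i = w_i` for `0 ≤ i ≤ r_1-1`, and
`φ'_{s·r_1+i} = ∂^s w_{r_1-1} / (∂g_{r_1}^{s-1} ∂g_{1+i})` for `s ≥ 1`, `0 ≤ i ≤ r_1-1`. -/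
def phi' (r1 r : ℕ) (h1 : 0 < r1) (h2 : r1 < r) (w : Fin r → R r1 r) (m : ℕ) : R r1 r :=
  if h : m < r1 then w ⟨m, by omega⟩
  else
    (fun q => pderiv (Sum.inl (⟨r1 - 1, by omega⟩ : Fin r1)) q)^[m / r1 - 1]
      (pderiv (Sum.inl (⟨m % r1, Nat.mod_lt m h1⟩ : Fin r1)) (w ⟨r1 - 1, by omega⟩))

/-- The substitution `g_k ↦ γ_{n-k}`, `b_j ↦ b_j`, from `S = R r1 r` to `R n r`. -/
def subst (n r r1 : ℕ) (γ : ℕ → R n r) : R r1 r →ₐ[ℂ] R n r :=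
  aeval (Sum.elim (fun i : Fin r1 => γ (n - ((i : ℕ) + 1))) fun j : Fin r => X (Sum.inr j))


/-- From `n = q_1·r + r_1` with `q_1 ≥ 1` we get `r ≤ n`. -/
theorem rle (q1 r r1 n : ℕ) (hq1 : 1 ≤ q1) (hn : n = q1 * r + r1) : r ≤ n := by
  have := Nat.le_mul_of_pos_left r hq1
  omega


end TB

namespace Derivation

open PowerSeries

variable {R A : Type*} [CommRing R] [CommRing A] [Algebra R A]

noncomputable def mapCoeffsPowerSeries (δ : Derivation R A A) :
    Derivation R A⟦X⟧ A⟦X⟧ where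
  toFun f := PowerSeries.mk fun k => δ (coeff k f)
  map_add' f g := by ext; simp
  map_smul' c f := by ext; simp
  map_one_eq_zero' := by ext k; simp [PowerSeries.coeff_one, apply_ite δ]
  leibniz' f g := by
    ext k
    simp only [LinearMap.coe_mk, AddHom.coe_mk, PowerSeries.coeff_mul, map_sum, leibniz,
      smul_eq_mul, Finset.sum_add_distrib, coeff_mk, map_add, add_right_inj]
    rw [← Finset.Nat.sum_antidiagonal_swap (f := fun p => coeff p.1 g * _)]
    simp [mul_comm]

@[simp]
theorem coeff_mapCoeffsPowerSeries (δ : Derivation R A A) (f : A⟦X⟧) (k : ℕ) :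
    coeff k (δ.mapCoeffsPowerSeries f) = δ (coeff k f) := by
  simp [mapCoeffsPowerSeries]

theorem leibniz_pow_mul_of_mul_eq_one (D : Derivation R A A) {a b c : A} (hbc : b * c = 1)
    (ha : D a = 0) (m : ℕ) :
    D (c ^ (m + 1) * a) = -((m + 1) • (c ^ (m + 2) * a * D b)) := by
  rw [D.leibniz, ha, smul_zero, zero_add, D.leibniz_pow,
    D.leibniz_of_mul_eq_one (by rwa [mul_comm] : c * b = 1)]
  simp only [smul_eq_mul, nsmul_eq_mul, Nat.add_sub_cancel]
  push_cast
  ring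

end Derivation

namespace PowerSeries

variable {A : Type*} [CommRing A]

theorem mk_span_X_pow_eq_iff {m : ℕ} {f g : A⟦X⟧} :
    Ideal.Quotient.mk (Ideal.span {X ^ m}) f = Ideal.Quotient.mk (Ideal.span {X ^ m}) g ↔
      ∀ k < m, coeff k f = coeff k g := by
  simp [Ideal.Quotient.eq, Ideal.mem_span_singleton, X_pow_dvd_iff, sub_eq_zero]

def truncMod (I : Ideal A) (m : ℕ) :
    A⟦X⟧ →+* (A ⧸ I)⟦X⟧ ⧸ Ideal.span {(X : (A ⧸ I)⟦X⟧) ^ m} :=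
  (Ideal.Quotient.mk _).comp (map (Ideal.Quotient.mk I))

theorem truncMod_eq_iff {I : Ideal A} {m : ℕ} {f g : A⟦X⟧} :
    truncMod I m f = truncMod I m g ↔ ∀ k < m, coeff k f - coeff k g ∈ I := by
  rw [truncMod, RingHom.comp_apply, RingHom.comp_apply, mk_span_X_pow_eq_iff]
  simp only [coeff_map, Ideal.Quotient.eq]

theorem coeff_pow_eq_zero_of_lt {B : A⟦X⟧} {r : ℕ} (hB : ∀ k, r < k → coeff k B = 0) :
    ∀ t k, t * r < k → coeff k (B ^ t) = 0 := by
  intro t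
  induction t with
  | zero => intro k hk; simp only [pow_zero, coeff_one, ite_eq_right_iff]; omega
  | succ t ih =>
    intro k hk
    rw [pow_succ, coeff_mul]
    refine Finset.sum_eq_zero fun p hp => ?_
    rw [Finset.HasAntidiagonal.mem_antidiagonal] at hp
    by_cases h : t * r < p.1
    · rw [ih _ h, zero_mul]
    · rw [hB _ (by rw [add_mul] at hk; omega), mul_zero]

theorem coeff_eq_zero_of_coeff_pow_mul_eq_zero {B F : A⟦X⟧} {r c q : ℕ} (hr : 0 < r)
    (hB0 : constantCoeff B = 1) (hB : ∀ k, r < k → coeff k B = 0)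
    (hF : ∀ t < q, ∀ k, t * r + c < k → k ≤ t * r + r + c → coeff k (B ^ t * F) = 0) :
    ∀ k, c < k → k ≤ q * r + c → coeff k F = 0 := by
  intro k
  induction k using Nat.strong_induction_on with
  | _ k ih =>
  intro hck hkq
  set t := (k - c - 1) / r
  have ht₁ : t * r ≤ k - c - 1 := Nat.div_mul_le_self _ _
  have ht₂ : k - c - 1 < t * r + r := Nat.lt_div_mul_add hr
  have htq : t < q := by
    by_contra! h
    have := Nat.mul_le_mul_right r h
    omega
  -- apart from `coeff k F`, the terms of `coeff k (B ^ t * F)` vanish by degree or by induction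
  have hrest : ∑ p ∈ (Finset.HasAntidiagonal.antidiagonal k).erase (0, k),
      coeff p.1 (B ^ t) * coeff p.2 F = 0 := by
    refine Finset.sum_eq_zero fun p hp => ?_
    rw [Finset.mem_erase, Finset.HasAntidiagonal.mem_antidiagonal] at hp
    by_cases hp₁ : t * r < p.1
    · rw [coeff_pow_eq_zero_of_lt hB t _ hp₁, zero_mul]
    · have hp₂ : p.2 < k := by
        by_contra! h
        exact hp.1 (Prod.ext (by omega) (by omega))
      rw [ih p.2 hp₂ (by omega) (by omega), mul_zero]
  have h := hF t htq k (by omega) (by omega)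
  have h₀ : ((0 : ℕ), k) ∈ Finset.HasAntidiagonal.antidiagonal k := by simp
  rwa [coeff_mul, ← Finset.add_sum_erase _ _ h₀, hrest, add_zero,
    coeff_zero_eq_constantCoeff_apply, map_pow, hB0, one_pow, one_mul] at h

end PowerSeries

namespace TB

section Series

variable {A : Type*} [CommRing A]

@[simp]
theorem coeff_ser (m : ℕ) (cf : ℕ → A) (k : ℕ) :
    PowerSeries.coeff k (ser m cf) = if k = 0 then 1 else if k ≤ m then cf k else 0 :=
  PowerSeries.coeff_mk _ _

@[simp]
theorem constantCoeff_ser (m : ℕ) (cf : ℕ → A) :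
    PowerSeries.constantCoeff (ser m cf) = 1 := by
  simp [← PowerSeries.coeff_zero_eq_constantCoeff_apply]

end Series

variable {n r : ℕ} {d : Fin n → R n r} {Binv : PowerSeries (R n r)}

theorem coeff_Bser_of_lt {k : ℕ} (hk : r < k) : PowerSeries.coeff k (Bser n r) = 0 := by
  simp [Bser, Nat.not_le.2 hk, Nat.ne_zero_of_lt hk]

theorem constantCoeff_eq_one_of_Bser_mul_eq_one (hBinv : Bser n r * Binv = 1) :
    PowerSeries.constantCoeff Binv = 1 := by
  simpa [Bser] using congrArg PowerSeries.constantCoeff hBinv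

theorem mapCoeffsPowerSeries_pderiv_Bser (j : Fin r) :
    (pderiv (Sum.inr j)).mapCoeffsPowerSeries (Bser n r) = PowerSeries.X ^ (r - (j : ℕ)) := by
  ext k : 1
  simp only [Derivation.coeff_mapCoeffsPowerSeries, Bser, coeff_ser, PowerSeries.coeff_X_pow]
  have := j.isLt
  split_ifs <;> simp_all [pderiv_X, Pi.single_apply, Fin.ext_iff] <;> omega

theorem mapCoeffsPowerSeries_pderiv_Aser (j : Fin r) :
    (pderiv (Sum.inr j)).mapCoeffsPowerSeries (Aser n r) = 0 := by
  ext k : 1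
  simp only [Derivation.coeff_mapCoeffsPowerSeries, Aser, coeff_ser]
  split_ifs <;> simp [pderiv_X]

theorem coeff_Dser_eq_coeff_inv_mul_Aser (hd : dSpec n r d) (hBinv : Bser n r * Binv = 1) :
    ∀ k ≤ n, PowerSeries.coeff k (Dser n r d) = PowerSeries.coeff k (Binv * Aser n r) := by
  let π := Ideal.Quotient.mk (Ideal.span {(PowerSeries.X : PowerSeries (R n r)) ^ (n + 1)})
  have hBD : π (Bser n r * Dser n r d) = π (Aser n r) :=
    PowerSeries.mk_span_X_pow_eq_iff.2 fun k hk => hd k (Nat.lt_succ_iff.1 hk)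
  have hD : π (Dser n r d) = π (Binv * Aser n r) := by
    rw [map_mul, ← hBD, ← map_mul, ← mul_assoc, mul_comm Binv, hBinv, one_mul]
  exact fun k hk => PowerSeries.mk_span_X_pow_eq_iff.1 hD k (Nat.lt_succ_of_le hk)

theorem d_eq_coeff_inv_mul_Aser (hd : dSpec n r d) (hBinv : Bser n r * Binv = 1) (m : Fin n) :
    d m = PowerSeries.coeff (n - m) (Binv * Aser n r) := by
  rw [← coeff_Dser_eq_coeff_inv_mul_Aser hd hBinv _ (Nat.sub_le _ _)]
  have := m.isLt
  simp [Dser, show n - m ≠ 0 by omega, show n - (n - (m : ℕ)) = m by omega]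

theorem pderiv_coeff_inv_pow_mul_Aser (hBinv : Bser n r * Binv = 1) (j : Fin r) (m : ℕ)
    {k : ℕ} (hk : r - j ≤ k) :
    pderiv (Sum.inr j) (PowerSeries.coeff k (Binv ^ (m + 1) * Aser n r))
      = -((m + 1 : ℂ) • PowerSeries.coeff (k - (r - j)) (Binv ^ (m + 2) * Aser n r)) := by
  rw [← Derivation.coeff_mapCoeffsPowerSeries, Derivation.leibniz_pow_mul_of_mul_eq_one _ hBinv
    (mapCoeffsPowerSeries_pderiv_Aser j), mapCoeffsPowerSeries_pderiv_Bser, map_neg, map_nsmul,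
    PowerSeries.coeff_mul_X_pow', if_pos hk]
  norm_cast

theorem psi_mul_add_of_pos (hr : 0 < r) (hrn : r ≤ n) {s i : ℕ} (hs : 0 < s) (hi : i < r) :
    psi n r hr hrn d (s * r + i) = (fun q => pderiv (Sum.inr (⟨0, hr⟩ : Fin r)) q)^[s - 1]
      (pderiv (Sum.inr (⟨r - 1 - i, by omega⟩ : Fin r)) (d ⟨r - 1, by omega⟩)) := by
  have hdiv : (s * r + i) / r = s := by
    rw [Nat.add_comm, Nat.add_mul_div_right _ _ hr, Nat.div_eq_of_lt hi, zero_add]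
  have hmod : (s * r + i) % r = i := by
    rw [Nat.add_comm, Nat.add_mul_mod_self_right, Nat.mod_eq_of_lt hi]
  rw [psi, dif_neg (by nlinarith)]
  simp only [hdiv, hmod]

theorem psi_mul_add_eq_smul_coeff (hr : 0 < r) (hrn : r ≤ n) (hd : dSpec n r d)
    (hBinv : Bser n r * Binv = 1) {i : ℕ} (hi : i < r) :
    ∀ s, s * r + i < n → psi n r hr hrn d (s * r + i) = ((-1 : ℂ) ^ s * s.factorial) •
      PowerSeries.coeff (n - s * r - i) (Binv ^ (s + 1) * Aser n r)
  | 0, _ => by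
    rw [zero_mul, zero_add, psi, dif_pos hi, d_eq_coeff_inv_mul_Aser hd hBinv]
    simp
  | 1, h => by
    rw [psi_mul_add_of_pos hr hrn one_pos hi, Nat.sub_self, Function.iterate_zero_apply,
      d_eq_coeff_inv_mul_Aser hd hBinv, ← pow_one Binv,
      pderiv_coeff_inv_pow_mul_Aser hBinv _ 0 (by simp only [tsub_le_iff_right]; omega),
      ← neg_smul, show n - (r - 1) - (r - (r - 1 - i)) = n - 1 * r - i by omega]
    norm_num
  | s + 2, h => by
    have hsr : (s + 2) * r = (s + 1) * r + r := by ring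
    have ih := psi_mul_add_eq_smul_coeff hr hrn hd hBinv hi (s + 1) (by omega)
    rw [psi_mul_add_of_pos hr hrn (by omega) hi] at ih ⊢
    rw [show s + 2 - 1 = (s + 1 - 1) + 1 by omega, Function.iterate_succ_apply', ih,
      Derivation.map_smul, pderiv_coeff_inv_pow_mul_Aser hBinv _ (s + 1)
        (by simp only [tsub_zero]; omega), smul_neg, smul_smul, ← neg_smul]
    congr 2
    · push_cast [Nat.factorial_succ]; ring
    · congr 1; simp only [tsub_zero]; omega

def psiIdeal (hr : 0 < r) (hrn : r ≤ n) (d : Fin n → R n r) (q : ℕ) : Ideal (R n r) :=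
  Ideal.span (Set.range fun m : Fin (q * r) => psi n r hr hrn d m)

theorem coeff_inv_pow_mul_Aser_mem_psiIdeal (hr : 0 < r) (hrn : r ≤ n) (hd : dSpec n r d)
    (hBinv : Bser n r * Binv = 1) {q : ℕ} (hqn : q * r ≤ n) {s i : ℕ} (hs : s < q)
    (hi : i < r) :
    PowerSeries.coeff (n - s * r - i) (Binv ^ (s + 1) * Aser n r) ∈ psiIdeal hr hrn d q := by
  have hsq : s * r + r ≤ q * r := by simpa [add_mul] using Nat.mul_le_mul_right r hs
  have hψ : psi n r hr hrn d (s * r + i) ∈ psiIdeal hr hrn d q :=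
    Ideal.subset_span ⟨⟨s * r + i, by omega⟩, rfl⟩
  rw [psi_mul_add_eq_smul_coeff hr hrn hd hBinv hi s (by omega)] at hψ
  have hc : ((-1 : ℂ) ^ s * s.factorial) ≠ 0 := by simp [Nat.factorial_ne_zero]
  have := Submodule.smul_of_tower_mem _ ((-1 : ℂ) ^ s * s.factorial)⁻¹ hψ
  rwa [smul_smul, inv_mul_cancel₀ hc, one_smul] at this

theorem coeff_inv_pow_mul_Aser_mem_psiIdeal_of_lt (hr : 0 < r) (hrn : r ≤ n) (hd : dSpec n r d)
    (hBinv : Bser n r * Binv = 1) {q c : ℕ} (hn : n = q * r + c) {k : ℕ} (hck : c < k)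
    (hkn : k ≤ n) :
    PowerSeries.coeff k (Binv ^ q * Aser n r) ∈ psiIdeal hr hrn d q := by
  let π := Ideal.Quotient.mk (psiIdeal hr hrn d q)
  rw [← Ideal.Quotient.eq_zero_iff_mem, ← PowerSeries.coeff_map]
  refine PowerSeries.coeff_eq_zero_of_coeff_pow_mul_eq_zero (B := PowerSeries.map π (Bser n r))
    hr (by simp [← PowerSeries.coeff_zero_eq_constantCoeff_apply, Bser])
    (fun k hk => by simp [coeff_Bser_of_lt hk]) ?_ k hck (hn ▸ hkn)
  intro t ht k hk₁ hk₂
  obtain ⟨s, rfl⟩ : ∃ s, q = t + (s + 1) := ⟨q - t - 1, by omega⟩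
  have hpow : Bser n r ^ t * Binv ^ (t + (s + 1)) = Binv ^ (s + 1) := by
    rw [pow_add, ← mul_assoc, ← mul_pow, hBinv, one_pow, one_mul]
  have hqr : (t + (s + 1)) * r = t * r + s * r + r := by ring
  have hnk : n - s * r - (n - s * r - k) = k := by omega
  rw [← map_pow, ← map_mul, ← mul_assoc, hpow, PowerSeries.coeff_map, ← hnk,
    Ideal.Quotient.eq_zero_iff_mem]
  exact coeff_inv_pow_mul_Aser_mem_psiIdeal hr hrn hd hBinv (by omega) (by omega) (by omega)

theorem coeff_ser_sub_coeff_inv_pow_mul_Aser_mem_psiIdeal (hr : 0 < r) (hrn : r ≤ n)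
    (hd : dSpec n r d) (hBinv : Bser n r * Binv = 1) {q c : ℕ} (hn : n = q * r + c)
    {γ : ℕ → R n r}
    (hγ : ∀ k, 1 ≤ k → k ≤ c → γ (n - k) = PowerSeries.coeff k (Binv ^ q * Aser n r)) :
    ∀ k ≤ n, PowerSeries.coeff k (ser c fun j => γ (n - j))
        - PowerSeries.coeff k (Binv ^ q * Aser n r) ∈ psiIdeal hr hrn d q := by
  intro k hkn
  rw [coeff_ser]
  split_ifs with hk₀ hkc
  · simp [hk₀, constantCoeff_eq_one_of_Bser_mul_eq_one hBinv, Aser]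
  · simp [hγ k (by omega) hkc]
  · rw [zero_sub, Ideal.neg_mem_iff]
    exact coeff_inv_pow_mul_Aser_mem_psiIdeal_of_lt hr hrn hd hBinv hn (by omega) hkn

theorem coeff_Dser_mul_ser_eq_coeff_Bser_pow (hBinv : Bser n r * Binv = 1) {q : ℕ}
    {α β : ℕ → R n r}
    (hα : ∀ k, 1 ≤ k → k < n → α (n - k) = PowerSeries.coeff k (Binv ^ q * Dhatser n r d))
    (hβ : ∀ k, k < n →
      PowerSeries.coeff k
          (ser (n - 1) (fun j => α (n - j)) * ser (n - 1) fun j => β (n - j))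
        = if k = 0 then 1 else 0) :
    ∀ k < n, PowerSeries.coeff k (Dser n r d * ser (n - 1) fun j => β (n - j))
      = PowerSeries.coeff k (Bser n r ^ q) := by
  let π := Ideal.Quotient.mk (Ideal.span {(PowerSeries.X : PowerSeries (R n r)) ^ n})
  have hDhat : π (Dhatser n r d) = π (Dser n r d) :=
    PowerSeries.mk_span_X_pow_eq_iff.2 fun k hk => by
      simp only [Dhatser, Dser, coeff_ser]
      split_ifs <;> first | rfl | omega
  have hα' : π (ser (n - 1) fun j => α (n - j)) = π Binv ^ q * π (Dser n r d) := by
    rw [← hDhat, ← map_pow, ← map_mul]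
    refine PowerSeries.mk_span_X_pow_eq_iff.2 fun k hk => ?_
    rcases Nat.eq_zero_or_pos k with rfl | hk₀
    · simp [constantCoeff_eq_one_of_Bser_mul_eq_one hBinv, Dhatser]
    · rw [coeff_ser, if_neg hk₀.ne', if_pos (by omega), hα k hk₀ hk]
  have hβ' : π (ser (n - 1) fun j => α (n - j)) * π (ser (n - 1) fun j => β (n - j)) = 1 := by
    rw [← map_mul, ← map_one π]
    exact PowerSeries.mk_span_X_pow_eq_iff.2 fun k hk => by rw [hβ k hk, PowerSeries.coeff_one]
  have hBq : (π (Bser n r) * π Binv) ^ q = 1 := by rw [← map_mul, hBinv, map_one, one_pow]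
  rw [hα'] at hβ'
  have hDβ : π (Dser n r d * ser (n - 1) fun j => β (n - j)) = π (Bser n r ^ q) := by
    rw [map_mul, map_pow]
    linear_combination π (Bser n r) ^ q * hβ'
      - π (Dser n r d) * π (ser (n - 1) fun j => β (n - j)) * hBq
  exact PowerSeries.mk_span_X_pow_eq_iff.1 hDβ

theorem map_subst_Bser (r1 : ℕ) (γ : ℕ → R n r) :
    PowerSeries.map (subst n r r1 γ : R r1 r →+* R n r) (Bser r1 r) = Bser n r := by
  ext k : 1
  simp only [PowerSeries.coeff_map, Bser, coeff_ser]
  split_ifs <;> simp [subst]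

theorem map_subst_Gser (r1 : ℕ) (γ : ℕ → R n r) :
    PowerSeries.map (subst n r r1 γ : R r1 r →+* R n r) (Gser r1 r)
      = ser r1 fun k => γ (n - k) := by
  ext k : 1
  simp only [PowerSeries.coeff_map, Gser, coeff_ser]
  split_ifs <;> simp_all [subst, Nat.sub_add_cancel]

theorem truncMod_Dser_mul_map_subst_Wser (hr : 0 < r) (hrn : r ≤ n) (hd : dSpec n r d)
    (hBinv : Bser n r * Binv = 1) {q r1 : ℕ} (hn : n = q * r + r1) {γ : ℕ → R n r}
    (hγ : ∀ k, 1 ≤ k → k ≤ r1 → γ (n - k) = PowerSeries.coeff k (Binv ^ q * Aser n r))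
    {w : Fin r → R r1 r} (hw : wSpec r1 r w) :
    PowerSeries.truncMod (psiIdeal hr hrn d q) (r + 1)
        (Dser n r d * PowerSeries.map (subst n r r1 γ : R r1 r →+* R n r) (Wser r1 r w))
      = PowerSeries.truncMod (psiIdeal hr hrn d q) (r + 1) (Bser n r ^ q) := by
  set ρ := PowerSeries.truncMod (psiIdeal hr hrn d q) (r + 1)
  set σ : R r1 r →+* R n r := (subst n r r1 γ : R r1 r →+* R n r)
  have hB : ρ (Bser n r) * ρ Binv = 1 := by rw [← map_mul, hBinv, map_one]
  have hD : ρ (Bser n r) * ρ (Dser n r d) = ρ (Aser n r) := by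
    rw [← map_mul]
    exact PowerSeries.truncMod_eq_iff.2 fun k hk => by
      rw [hd k (by omega), sub_self]; exact Ideal.zero_mem _
  have hΓ : ρ (PowerSeries.map σ (Gser r1 r)) = ρ Binv ^ q * ρ (Aser n r) := by
    rw [← map_pow, ← map_mul, map_subst_Gser]
    exact PowerSeries.truncMod_eq_iff.2 fun k hk =>
      coeff_ser_sub_coeff_inv_pow_mul_Aser_mem_psiIdeal hr hrn hd hBinv hn hγ k (by omega)
  have hW : ρ (PowerSeries.map σ (Gser r1 r)) * ρ (PowerSeries.map σ (Wser r1 r w))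
      = ρ (Bser n r) := by
    rw [← map_mul, ← map_mul, ← map_subst_Bser r1 γ]
    exact PowerSeries.truncMod_eq_iff.2 fun k hk => by
      rw [PowerSeries.coeff_map, PowerSeries.coeff_map, hw k (by omega), sub_self]
      exact Ideal.zero_mem _
  rw [hΓ, ← hD] at hW
  set W := ρ (PowerSeries.map σ (Wser r1 r w))
  have hUW : ρ Binv ^ q * ρ (Dser n r d) * W = 1 := by
    linear_combination ρ Binv * hW + (1 - ρ Binv ^ q * ρ (Dser n r d) * W) * hB
  have hBq : (ρ (Bser n r) * ρ Binv) ^ q = 1 := by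
    rw [← map_mul, ← map_pow, hBinv, one_pow, map_one]
  rw [map_mul, map_pow]
  linear_combination ρ (Bser n r) ^ q * hUW - ρ (Dser n r d) * W * hBq

/-- Proposition 3.12: `φ_i ≡ ψ_{q_1r+i} (mod (ψ_0,…,ψ_{q_1r-1}))` for
`0 ≤ i ≤ r_1-1`, where `ψ_{q_1r+i} = β_{(q_1-1)r+r_1+i}` and `φ_i` is the substitution
`g_k ↦ γ_{n-k}` applied to `w_i`. -/
theorem stmt13 (n r q1 r1 : ℕ) (hq1 : 1 ≤ q1) (h1 : 0 < r1) (h2 : r1 < r)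
    (hn : n = q1 * r + r1)
    (d : Fin n → R n r) (hd : dSpec n r d)
    (Binv : PowerSeries (R n r)) (hBinv : Bser n r * Binv = 1)
    (α β : ℕ → R n r)
    (hα : ∀ k, 1 ≤ k → k < n →
      α (n - k) = PowerSeries.coeff k (Binv ^ q1 * Dhatser n r d))
    (hβ : ∀ k, k < n →
      PowerSeries.coeff k
          (ser (n - 1) (fun j => α (n - j)) * ser (n - 1) fun j => β (n - j))
        = if k = 0 then 1 else 0)
    (γ : ℕ → R n r)
    (hγ : ∀ k, 1 ≤ k → k ≤ r1 →
      γ (n - k) = PowerSeries.coeff k (Binv ^ q1 * Aser n r))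
    (w : Fin r → R r1 r) (hw : wSpec r1 r w) :
    ∀ i : Fin r1,
      subst n r r1 γ (w (Fin.castLE (by omega : r1 ≤ r) i))
          - β ((q1 - 1) * r + r1 + (i : ℕ)) ∈
        Ideal.span (Set.range fun m : Fin (q1 * r) =>
          psi n r (by omega) (rle q1 r r1 n (by omega) hn) d (m : ℕ)) := by
  intro i
  have hr : 0 < r := by omega
  have hrn := rle q1 r r1 n hq1 hn
  have hqr : r ≤ q1 * r := Nat.le_mul_of_pos_left r hq1
  set ρ := PowerSeries.truncMod (psiIdeal hr hrn d q1) (r + 1)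
  have hβside : ρ (Dser n r d * ser (n - 1) fun j => β (n - j)) = ρ (Bser n r ^ q1) :=
    PowerSeries.truncMod_eq_iff.2 fun k hk => by
      rw [coeff_Dser_mul_ser_eq_coeff_Bser_pow hBinv hα hβ k (by omega), sub_self]
      exact Ideal.zero_mem _
  have hwside := truncMod_Dser_mul_map_subst_Wser hr hrn hd hBinv hn hγ hw
  -- modulo `I` and `t^{r+1}` both series solve `D · x = B^{q₁}`, and `D` is a unit
  have hDunit : IsUnit (ρ (Dser n r d)) :=
    (PowerSeries.isUnit_iff_constantCoeff.2 (by simp [Dser])).map ρ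
  have key := hDunit.mul_left_cancel <| (map_mul ρ _ _).symm.trans <|
    hwside.trans <| hβside.symm.trans (map_mul ρ _ _)
  have hidx : n - (r - i) = (q1 - 1) * r + r1 + i := by rw [Nat.sub_one_mul]; omega
  have := PowerSeries.truncMod_eq_iff.1 key (r - i) (by omega)
  simp only [PowerSeries.coeff_map, Wser, coeff_ser, hidx, show r - i ≠ 0 by omega,
    show 1 ≤ r - i by omega, show r - i ≤ n - 1 by omega, show r - (r - i) = i by omega,
    Nat.sub_le, and_self, if_true, if_false, dif_pos] at this
  exact this

end TB
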